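/- arXiv:2312.13841 — 2 statements merged into one kernel-verified Lean document; each statement's English description precedes it below -/
import Mathlib

section
/- Let a be a real number with 1/2 < a ≤ 2 − √2, set r₁ = (a − √(a² − 4a + 2))/2, r₂ = (a + √(a² − 4a + 2))/2 (both strictly positive), and R(z) = (1 + (1 − a)z) / ((1 − r₁ z)(1 − r₂ z)). Then the scheme is l₀-stable: for every real z < 0 the denominator is strictly positive and |R(z)| < 1, and R(z) → 0 as z → −∞. -/
set_option maxHeartbeats 1000000

open Filter

/-- For `1/2 < a ≤ 2 − √2` the Twizell scheme is `l₀`-stable: `r₁, r₂ > 0`, for every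
`z < 0` the denominator is positive and `|R z| < 1`, and `R z → 0` as `z → −∞`. -/
theorem twizell_scheme_l0_stable
    (a : ℝ) (ha1 : 1 / 2 < a) (ha2 : a ≤ 2 - Real.sqrt 2)
    (r₁ r₂ : ℝ)
    (h1 : r₁ = (a - Real.sqrt (a ^ 2 - 4 * a + 2)) / 2)
    (h2 : r₂ = (a + Real.sqrt (a ^ 2 - 4 * a + 2)) / 2)
    (R : ℝ → ℝ)
    (hR : R = fun z => (1 + (1 - a) * z) / ((1 - r₁ * z) * (1 - r₂ * z))) :
    0 < r₁ ∧ 0 < r₂ ∧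
    (∀ z : ℝ, z < 0 → 0 < (1 - r₁ * z) * (1 - r₂ * z) ∧ |R z| < 1) ∧
    Tendsto R atBot (nhds 0) := by
  have h2nn : (0:ℝ) ≤ 2 := by norm_num
  have hsqrt2 : Real.sqrt 2 ^ 2 = 2 := Real.sq_sqrt h2nn
  have hsqrt2nn : (0:ℝ) ≤ Real.sqrt 2 := Real.sqrt_nonneg 2
  have hsqrt2gt : (1:ℝ) < Real.sqrt 2 := by nlinarith
  have ha_lt1 : a < 1 := by linarith
  set s := Real.sqrt (a ^ 2 - 4 * a + 2) with hs
  have hdisc : (0:ℝ) ≤ a ^ 2 - 4 * a + 2 := by nlinarith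
  have hs2 : s ^ 2 = a ^ 2 - 4 * a + 2 := Real.sq_sqrt hdisc
  have hsnn : 0 ≤ s := Real.sqrt_nonneg _
  have hsa : s < a := by nlinarith
  have hr1 : 0 < r₁ := by rw [h1]; linarith
  have hr2 : 0 < r₂ := by rw [h2]; linarith
  have hsum : r₁ + r₂ = a := by rw [h1, h2]; ring
  have hprod : r₁ * r₂ = a - 1 / 2 := by
    rw [h1, h2]; nlinarith [hs2]
  have hDeq : ∀ z : ℝ, (1 - r₁ * z) * (1 - r₂ * z)
      = 1 - a * z + (a - 1 / 2) * z ^ 2 := by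
    intro z
    linear_combination z ^ 2 * hprod - z * hsum
  have hkey : ∀ z : ℝ, z < 0 → 0 < (1 - r₁ * z) * (1 - r₂ * z) ∧ |R z| < 1 := by
    intro z hz
    have hD : 0 < (1 - r₁ * z) * (1 - r₂ * z) := by
      have : 0 < 1 - r₁ * z := by nlinarith
      have : 0 < 1 - r₂ * z := by nlinarith
      positivity
    refine ⟨hD, ?_⟩
    rw [hR]
    simp only
    rw [abs_div, abs_of_pos hD, div_lt_one hD, hDeq, abs_lt]
    constructor <;> nlinarith
  refine ⟨hr1, hr2, hkey, ?_⟩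
  have habs : Tendsto (fun z => |R z|) atBot (nhds 0) := by
    have hc : (0:ℝ) < a - 1 / 2 := by linarith
    apply squeeze_zero' (Filter.Eventually.of_forall fun z => abs_nonneg _)
      (g := fun z => (2 - a) / (a - 1 / 2) * (-z)⁻¹)
    · filter_upwards [eventually_le_atBot (-1 : ℝ)] with z hz
      have hz0 : z < 0 := by linarith
      have hD : 0 < (1 - r₁ * z) * (1 - r₂ * z) := (hkey z hz0).1
      have hNle : |1 + (1 - a) * z| ≤ (2 - a) * (-z) := by
        rw [abs_le]; constructor <;> nlinarith
      have hDge : (a - 1 / 2) * z ^ 2 ≤ (1 - r₁ * z) * (1 - r₂ * z) := by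
        rw [hDeq]; nlinarith
      rw [hR]
      simp only
      rw [abs_div, abs_of_pos hD]
      have hzpos : (0:ℝ) < -z := by linarith
      have h1' : |1 + (1 - a) * z| / ((1 - r₁ * z) * (1 - r₂ * z))
          ≤ ((2 - a) * (-z)) / ((a - 1 / 2) * z ^ 2) := by
        apply div_le_div₀ (mul_nonneg (by linarith) hzpos.le) hNle
          (mul_pos hc (by nlinarith : (0:ℝ) < z ^ 2)) hDge
      refine h1'.trans (le_of_eq ?_)
      have hrw : (2 - a) / (a - 1 / 2) * (-z)⁻¹ = (2 - a) / ((a - 1 / 2) * -z) := by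
        rw [← div_eq_mul_inv, div_div]
      rw [hrw, div_eq_div_iff (mul_pos hc (by nlinarith : (0:ℝ) < z ^ 2)).ne' (mul_pos hc hzpos).ne']
      ring
    · have h1 : Tendsto (fun z : ℝ => (-z)⁻¹) atBot (nhds 0) :=
        (tendsto_neg_atBot_atTop).inv_tendsto_atTop
      have := h1.const_mul ((2 - a) / (a - 1 / 2))
      simpa using this
  exact tendsto_zero_iff_abs_tendsto_zero R |>.mpr habs
end

section
/- Let Λ be a real diagonal r×r matrix with all diagonal entries λ_i ≤ 0, let τ > 0, and let a be a real number with 1/2 < a ≤ 2 − √2, r₁ = (a − √(a² − 4a + 2))/2, r₂ = (a + √(a² − 4a + 2))/2. Then the matrices I − r₁τΛ and I − r₂τΛ are invertible, and the step matrix S = (I − r₁τΛ)⁻¹(I − r₂τΛ)⁻¹(I + (1 − a)τΛ) of the second-order l₀-stable scheme satisfies ‖S x‖₂ ≤ ‖x‖₂ for every x ∈ ℝ^r. -/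
open Matrix

/-- For `Λ` diagonal with nonpositive entries, `τ > 0` and `1/2 < a ≤ 2 − √2`, the
matrices `I − r₁τΛ` and `I − r₂τΛ` are invertible and the step matrix
`S = (I − r₁τΛ)⁻¹(I − r₂τΛ)⁻¹(I + (1 − a)τΛ)` of the second-order `l₀`-stable
scheme is non-expansive in the Euclidean norm. -/
theorem twizell_step_matrix_nonexpansive
    (r : ℕ) (lam : Fin r → ℝ) (hlam : ∀ i, lam i ≤ 0)
    (Λ : Matrix (Fin r) (Fin r) ℝ) (hΛ : Λ = Matrix.diagonal lam)
    (τ : ℝ) (hτ : 0 < τ)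
    (a : ℝ) (ha1 : 1 / 2 < a) (ha2 : a ≤ 2 - Real.sqrt 2)
    (r₁ r₂ : ℝ)
    (h1 : r₁ = (a - Real.sqrt (a ^ 2 - 4 * a + 2)) / 2)
    (h2 : r₂ = (a + Real.sqrt (a ^ 2 - 4 * a + 2)) / 2)
    (S : Matrix (Fin r) (Fin r) ℝ)
    (hS : S = (1 - (r₁ * τ) • Λ)⁻¹ * (1 - (r₂ * τ) • Λ)⁻¹ * (1 + ((1 - a) * τ) • Λ)) :
    IsUnit (1 - (r₁ * τ) • Λ) ∧ IsUnit (1 - (r₂ * τ) • Λ) ∧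
    ∀ x : Fin r → ℝ,
      Real.sqrt (∑ i, (S *ᵥ x) i ^ 2) ≤ Real.sqrt (∑ i, x i ^ 2) := by
  have hs2 : Real.sqrt 2 ^ 2 = 2 := Real.sq_sqrt (by norm_num)
  have hs2n : (0:ℝ) ≤ Real.sqrt 2 := Real.sqrt_nonneg 2
  have hd : 0 ≤ a ^ 2 - 4 * a + 2 := by nlinarith
  have hsd : Real.sqrt (a ^ 2 - 4 * a + 2) ^ 2 = a ^ 2 - 4 * a + 2 := Real.sq_sqrt hd
  have hsdn : (0:ℝ) ≤ Real.sqrt (a ^ 2 - 4 * a + 2) := Real.sqrt_nonneg _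
  have hsda : Real.sqrt (a ^ 2 - 4 * a + 2) ≤ a := by
    nlinarith [hsd, hsdn]
  have hr1 : 0 ≤ r₁ := by rw [h1]; linarith
  have hr2 : 0 ≤ r₂ := by rw [h2]; linarith
  have hprod : r₁ * r₂ = (2 * a - 1) / 2 := by
    rw [h1, h2]; nlinarith [hsd]
  have hsum : r₁ + r₂ = a := by rw [h1, h2]; ring
  -- positivity of the diagonal entries
  have hv1 : ∀ i, (0:ℝ) < 1 - r₁ * τ * lam i := fun i => by
    nlinarith [hlam i, mul_nonneg hr1 hτ.le]
  have hv2 : ∀ i, (0:ℝ) < 1 - r₂ * τ * lam i := fun i => by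
    nlinarith [hlam i, mul_nonneg hr2 hτ.le]
  -- matrices as diagonals
  have hM1 : (1 - (r₁ * τ) • Λ) = Matrix.diagonal (fun i => 1 - r₁ * τ * lam i) := by
    ext i j
    by_cases h : i = j <;>
      simp [hΛ, Matrix.diagonal_apply, Matrix.one_apply, h, mul_assoc]
  have hM2 : (1 - (r₂ * τ) • Λ) = Matrix.diagonal (fun i => 1 - r₂ * τ * lam i) := by
    ext i j
    by_cases h : i = j <;>
      simp [hΛ, Matrix.diagonal_apply, Matrix.one_apply, h, mul_assoc]
  have hM3 : (1 + ((1 - a) * τ) • Λ) = Matrix.diagonal (fun i => 1 + (1 - a) * τ * lam i) := by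
    ext i j
    by_cases h : i = j <;>
      simp [hΛ, Matrix.diagonal_apply, Matrix.one_apply, h, mul_assoc]
  have hinv1 : (Matrix.diagonal (fun i => 1 - r₁ * τ * lam i))⁻¹
      = Matrix.diagonal (fun i => (1 - r₁ * τ * lam i)⁻¹) :=
    Matrix.inv_eq_right_inv (by
      rw [Matrix.diagonal_mul_diagonal]
      convert Matrix.diagonal_one using 2
      exact funext fun i => mul_inv_cancel₀ (hv1 i).ne')
  have hinv2 : (Matrix.diagonal (fun i => 1 - r₂ * τ * lam i))⁻¹
      = Matrix.diagonal (fun i => (1 - r₂ * τ * lam i)⁻¹) :=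
    Matrix.inv_eq_right_inv (by
      rw [Matrix.diagonal_mul_diagonal]
      convert Matrix.diagonal_one using 2
      exact funext fun i => mul_inv_cancel₀ (hv2 i).ne')
  have hU1 : IsUnit (1 - (r₁ * τ) • Λ) := by
    rw [hM1]
    rw [Matrix.isUnit_iff_isUnit_det, Matrix.det_diagonal, isUnit_iff_ne_zero]
    exact Finset.prod_ne_zero_iff.mpr fun i _ => (hv1 i).ne'
  have hU2 : IsUnit (1 - (r₂ * τ) • Λ) := by
    rw [hM2]
    rw [Matrix.isUnit_iff_isUnit_det, Matrix.det_diagonal, isUnit_iff_ne_zero]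
    exact Finset.prod_ne_zero_iff.mpr fun i _ => (hv2 i).ne'
  refine ⟨hU1, hU2, ?_⟩
  intro x
  apply Real.sqrt_le_sqrt
  apply Finset.sum_le_sum
  intro i _
  have hmul : (S *ᵥ x) i =
      (1 - r₁ * τ * lam i)⁻¹ * ((1 - r₂ * τ * lam i)⁻¹ * ((1 + (1 - a) * τ * lam i) * x i)) := by
    rw [hS, hM1, hM2, hM3, hinv1, hinv2, ← Matrix.mulVec_mulVec, ← Matrix.mulVec_mulVec,
      Matrix.mulVec_diagonal, Matrix.mulVec_diagonal, Matrix.mulVec_diagonal]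
  have ht : τ * lam i ≤ 0 := mul_nonpos_of_nonneg_of_nonpos hτ.le (hlam i)
  have e1 := hv1 i
  have e2 := hv2 i
  have habs : |1 + (1 - a) * τ * lam i| ≤ (1 - r₁ * τ * lam i) * (1 - r₂ * τ * lam i) := by
    rw [abs_le]
    constructor <;> nlinarith [sq_nonneg (τ * lam i), ht, ha1, hsum, hprod,
      mul_nonneg (mul_nonneg hr1 hr2) (sq_nonneg (τ * lam i))]
  have hkey : ((1 - r₁ * τ * lam i)⁻¹ * ((1 - r₂ * τ * lam i)⁻¹ * (1 + (1 - a) * τ * lam i))) ^ 2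
      ≤ 1 := by
    rw [sq_le_one_iff_abs_le_one, abs_mul, abs_mul, abs_inv, abs_inv,
      abs_of_pos e1, abs_of_pos e2]
    have hpos : 0 < (1 - r₁ * τ * lam i) * (1 - r₂ * τ * lam i) := mul_pos e1 e2
    rw [show (1 - r₁ * τ * lam i)⁻¹ * ((1 - r₂ * τ * lam i)⁻¹ * |1 + (1 - a) * τ * lam i|)
        = |1 + (1 - a) * τ * lam i| / ((1 - r₁ * τ * lam i) * (1 - r₂ * τ * lam i)) from by
      field_simp, div_le_one hpos]
    exact habs
  calc (S *ᵥ x) i ^ 2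
      = ((1 - r₁ * τ * lam i)⁻¹ * ((1 - r₂ * τ * lam i)⁻¹ * (1 + (1 - a) * τ * lam i))) ^ 2
        * x i ^ 2 := by rw [hmul]; ring
    _ ≤ 1 * x i ^ 2 := mul_le_mul_of_nonneg_right hkey (sq_nonneg _)
    _ = x i ^ 2 := one_mul _
end
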